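/- arXiv:1203.4976 — 2 statements merged into one kernel-verified Lean document; each statement's English description precedes it below -/
import Mathlib

section
/- Let k be a number field of degree d over ℚ having at least one real embedding. Then there exists α ∈ k such that ℚ(α) = k and H(α) ≤ (2/π)^(s/d) · |Δ_k|^(1/(2d)), where H is the absolute multiplicative Weil height, s is the number of complex places of k, and Δ_k is the discriminant of k. -/
open Polynomial NumberField

/-- The Mahler measure of an integer polynomial: the absolute value of the leading
coefficient times the product of `max 1 |z|` over the complex roots. -/
noncomputable def mahlerMeasure (f : Polynomial ℤ) : ℝ :=
  |(f.leadingCoeff : ℝ)| *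
    (((f.map (Int.castRingHom ℂ)).roots).map (fun z => max 1 ‖z‖)).prod

/-- The absolute multiplicative Weil height of an algebraic complex number, defined as
`M(f)^(1/deg f)` where `f` is an irreducible integer polynomial vanishing at `α`. -/
noncomputable def height (α : ℂ) : ℝ :=
  sInf {h : ℝ | ∃ f : Polynomial ℤ, Irreducible f ∧ Polynomial.aeval α f = 0 ∧
    h = mahlerMeasure f ^ ((f.natDegree : ℝ)⁻¹)}

/-!
Minkowski's theorem, applied to the box `w₀ < B`, `w < 1` (`w ≠ w₀`) of volume
`2^r π^s B` in the mixed space, gives for every `B > (2/π)^s √|Δ|` a nonzero algebraic integer `x`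
with `w₀ x < B` and `w x < 1` at all other places. Such `x` form a finite set, so the bound is
also attained with `B = (2/π)^s √|Δ|`. Being large at exactly one place, `x` generates `K`; as `w₀`
is real, all conjugates of `x` except `x` at `w₀` lie in the unit disc, so the Mahler measure of
its minimal polynomial, of degree `d`, is `w₀ x` and `H(x) ≤ (w₀ x)^(1/d)`.
-/

open NumberField.InfinitePlace NumberField.mixedEmbedding Module
open scoped IntermediateField NNReal

theorem mahlerMeasure_nonneg (f : ℤ[X]) : 0 ≤ mahlerMeasure f :=
  mul_nonneg (abs_nonneg _) <| Multiset.prod_nonneg fun _ hz ↦ by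
    obtain ⟨z, -, rfl⟩ := Multiset.mem_map.mp hz
    exact zero_le_one.trans (le_max_left _ _)

theorem height_le_mahlerMeasure_rpow {α : ℂ} {f : ℤ[X]} (hf : Irreducible f)
    (hα : aeval α f = 0) : height α ≤ mahlerMeasure f ^ (f.natDegree : ℝ)⁻¹ :=
  csInf_le ⟨0, by rintro _ ⟨g, -, -, rfl⟩; exact Real.rpow_nonneg (mahlerMeasure_nonneg g) _⟩
    ⟨f, hf, hα, rfl⟩

theorem Finset.prod_max_one_norm_le {E : Type*} [SeminormedAddCommGroup E] {s : Finset E}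
    {z₀ : E} (h : ∀ z ∈ s, z ≠ z₀ → ‖z‖ ≤ 1) : ∏ z ∈ s, max 1 ‖z‖ ≤ max 1 ‖z₀‖ := by
  by_cases hz₀ : z₀ ∈ s
  · rw [Finset.prod_eq_single_of_mem z₀ hz₀ fun z hz hne ↦ max_eq_left (h z hz hne)]
  · rw [Finset.prod_eq_one fun z hz ↦ max_eq_left (h z hz fun h ↦ hz₀ (h ▸ hz))]
    exact le_max_left _ _

theorem IntermediateField.adjoin_simple_coe_eq_of_adjoin_simple_eq_top {F E : Type*} [Field F]
    [Field E] [Algebra F E] {K : IntermediateField F E} {x : K} (hx : F⟮x⟯ = ⊤) :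
    F⟮(x : E)⟯ = K := by
  rw [← lift_adjoin_simple, hx, lift_top]

section GeneratorBound

variable (K : Type*) [Field K] [NumberField K]

noncomputable def generatorBound : ℝ≥0 :=
  (2 * NNReal.pi⁻¹) ^ nrComplexPlaces K * NNReal.sqrt ‖discr K‖₊

theorem minkowskiBound_one_eq :
    minkowskiBound K 1 = convexBodyLTFactor K * generatorBound K := by
  classical
  rw [minkowskiBound, volume_fundamentalDomain_fractionalIdealLatticeBasis, Units.val_one,
    FractionalIdeal.absNorm_one, Rat.cast_one, ENNReal.ofReal_one, one_mul,
    volume_fundamentalDomain_latticeBasis, mixedEmbedding.finrank,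
    ← card_add_two_mul_card_eq_rank, convexBodyLTFactor, generatorBound]
  rw [← ENNReal.coe_ofNat, ← ENNReal.coe_inv two_ne_zero]
  norm_cast
  apply NNReal.coe_injective
  push_cast [NNReal.coe_real_pi]
  rw [pow_add, mul_pow, inv_pow, inv_pow]
  field_simp
  ring

theorem generatorBound_rpow_inv_finrank :
    (generatorBound K : ℝ) ^ (finrank ℚ K : ℝ)⁻¹ =
      (2 / Real.pi) ^ ((nrComplexPlaces K : ℝ) / (finrank ℚ K : ℝ)) *
        |(discr K : ℝ)| ^ (1 / (2 * (finrank ℚ K : ℝ))) := by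
  rw [generatorBound, NNReal.coe_mul, NNReal.coe_pow, NNReal.coe_mul, NNReal.coe_inv,
    NNReal.coe_real_pi, Real.coe_sqrt, coe_nnnorm, Int.norm_eq_abs, ← div_eq_mul_inv,
    Real.mul_rpow (by positivity) (Real.sqrt_nonneg _), ← Real.rpow_natCast,
    ← Real.rpow_mul (by positivity), Real.sqrt_eq_rpow, ← Real.rpow_mul (abs_nonneg _)]
  congr 2; ring

variable {K}

theorem exists_ne_zero_lt_one_of_ne_of_generatorBound_lt {w₀ : InfinitePlace K}
    (hw₀ : w₀.IsReal) {B : ℝ} (hB : generatorBound K < B) :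
    ∃ x : 𝓞 K, x ≠ 0 ∧ (∀ w ≠ w₀, w x < 1) ∧ w₀ x < B := by
  classical
  have hB₀ : 0 < B := (NNReal.coe_nonneg _).trans_lt hB
  have hvol : minkowskiBound K 1 <
      MeasureTheory.volume (convexBodyLT K fun w ↦ if w = w₀ then B.toNNReal else 1) := by
    rw [convexBodyLT_volume, ← Finset.prod_erase_mul _ _ (Finset.mem_univ w₀)]
    simp_rw [ite_pow, one_pow]
    rw [Finset.prod_ite_eq']
    simp_rw [Finset.notMem_erase, ite_false, mult, hw₀, ite_true, one_mul, pow_one,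
      minkowskiBound_one_eq]
    gcongr
    · exact ENNReal.coe_ne_zero.mpr (convexBodyLTFactor_ne_zero K)
    · exact ENNReal.coe_ne_top
    · exact_mod_cast Real.lt_toNNReal_iff_coe_lt.mpr hB
  obtain ⟨x, hx₀, hx⟩ := exists_ne_zero_mem_ringOfIntegers_lt K hvol
  refine ⟨x, hx₀, fun w hw ↦ by simpa [hw] using hx w, by simpa [hB₀.le] using hx w₀⟩

theorem finite_setOf_lt_one_of_ne_of_lt (w₀ : InfinitePlace K) (B : ℝ) :
    {x : 𝓞 K | (∀ w ≠ w₀, w x < 1) ∧ w₀ x < B}.Finite := by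
  refine ((Embeddings.finite_of_norm_le K ℂ (max B 1)).preimage
    RingOfIntegers.coe_injective.injOn).subset fun x ⟨hlt, hB⟩ ↦
      ⟨RingOfIntegers.isIntegral_coe x, fun φ ↦ ?_⟩
  rw [← InfinitePlace.apply]
  by_cases h : InfinitePlace.mk φ = w₀
  · exact h ▸ hB.le.trans (le_max_left _ _)
  · exact (hlt _ h).le.trans (le_max_right _ _)

theorem exists_ne_zero_lt_one_of_ne_le_generatorBound {w₀ : InfinitePlace K}
    (hw₀ : w₀.IsReal) :
    ∃ x : 𝓞 K, x ≠ 0 ∧ (∀ w ≠ w₀, w x < 1) ∧ w₀ x ≤ generatorBound K := by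
  set S := {x : 𝓞 K | x ≠ 0 ∧ (∀ w ≠ w₀, w x < 1) ∧ w₀ x < generatorBound K + 1}
  have hS : S.Finite := (finite_setOf_lt_one_of_ne_of_lt w₀ _).subset fun x hx ↦ hx.2
  obtain ⟨x, hxS, hmin⟩ := S.exists_min_image (fun x ↦ w₀ x) hS
    (exists_ne_zero_lt_one_of_ne_of_generatorBound_lt hw₀ (lt_add_one _))
  refine ⟨x, hxS.1, hxS.2.1, le_of_forall_gt_imp_ge_of_dense fun B hB ↦ ?_⟩
  obtain ⟨y, hy₀, hy, hyB⟩ := exists_ne_zero_lt_one_of_ne_of_generatorBound_lt hw₀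
    (lt_min hB (lt_add_one (generatorBound K : ℝ)))
  exact (hmin y ⟨hy₀, hy, hyB.trans_le (min_le_right _ _)⟩).trans
    (hyB.trans_le (min_le_left _ _)).le

end GeneratorBound

section Minpoly

variable {K : Type*} [Field K] [NumberField K]

theorem map_minpoly_int_eq (x : 𝓞 K) :
    (minpoly ℤ (x : K)).map (Int.castRingHom ℂ) = (minpoly ℚ (x : K)).map (algebraMap ℚ ℂ) := by
  rw [minpoly.isIntegrallyClosed_eq_field_fractions' ℚ (RingOfIntegers.isIntegral_coe x),
    Polynomial.map_map, RingHom.ext_int (algebraMap ℚ ℂ |>.comp _) (Int.castRingHom ℂ)]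

theorem exists_embedding_eq_of_mem_roots {x : 𝓞 K} {z : ℂ}
    (hz : z ∈ ((minpoly ℤ (x : K)).map (Int.castRingHom ℂ)).roots) :
    ∃ φ : K →+* ℂ, φ x = z := by
  have hx : IsIntegral ℚ (x : K) := (RingOfIntegers.isIntegral_coe x).tower_top
  rw [map_minpoly_int_eq, mem_roots_map (minpoly.ne_zero hx)] at hz
  have hz' : z ∈ (minpoly ℚ (x : K)).rootSet ℂ := mem_rootSet.mpr ⟨minpoly.ne_zero hx, hz⟩
  rwa [← Embeddings.range_eval_eq_rootSet_minpoly] at hz'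

theorem nodup_roots_map_minpoly_int (x : 𝓞 K) :
    ((minpoly ℤ (x : K)).map (Int.castRingHom ℂ)).roots.Nodup :=
  nodup_roots <| map_minpoly_int_eq x ▸ Separable.map (Algebra.IsSeparable.isSeparable ℚ (x : K))

theorem mahlerMeasure_minpoly_le {w₀ : InfinitePlace K} (hw₀ : w₀.IsReal) (x : 𝓞 K)
    (h : ∀ w ≠ w₀, w x ≤ 1) : mahlerMeasure (minpoly ℤ (x : K)) ≤ max 1 (w₀ x) := by
  rw [_root_.mahlerMeasure, (minpoly.monic (RingOfIntegers.isIntegral_coe x)).leadingCoeff,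
    Int.cast_one, abs_one, one_mul, ← norm_embedding_eq]
  refine Finset.prod_max_one_norm_le (s := ⟨_, nodup_roots_map_minpoly_int x⟩) fun z hz hne ↦ ?_
  obtain ⟨φ, rfl⟩ := exists_embedding_eq_of_mem_roots hz
  rw [← InfinitePlace.apply]
  refine h _ fun hφ ↦ hne ?_
  rw [← hφ, embedding_mk_eq_of_isReal (isReal_mk_iff.mp (hφ ▸ hw₀))]

theorem natDegree_minpoly_int_eq_finrank {x : 𝓞 K} (hx : ℚ⟮(x : K)⟯ = ⊤) :
    (minpoly ℤ (x : K)).natDegree = finrank ℚ K := by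
  rw [← (Field.primitive_element_iff_minpoly_natDegree_eq ℚ (x : K)).mp hx,
    minpoly.isIntegrallyClosed_eq_field_fractions' ℚ (RingOfIntegers.isIntegral_coe x),
    (minpoly.monic (RingOfIntegers.isIntegral_coe x)).natDegree_map]

end Minpoly

/-- A number field with at least one real embedding has a generator `α` with
`H(α) ≤ (2/π)^(s/d) |Δ_k|^(1/(2d))`. -/
theorem generator_of_real_embedding (K : IntermediateField ℚ ℂ) [NumberField K]
    (hreal : ∃ v : InfinitePlace K, v.IsReal) :
    ∃ α : ℂ, α ∈ K ∧ IntermediateField.adjoin ℚ {α} = K ∧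
      height α ≤ (2 / Real.pi) ^ ((InfinitePlace.nrComplexPlaces K : ℝ) / (Module.finrank ℚ K : ℝ)) *
        |(NumberField.discr K : ℝ)| ^ (1 / (2 * (Module.finrank ℚ K : ℝ))) := by
  obtain ⟨w₀, hw₀⟩ := hreal
  obtain ⟨x, hx₀, hlt, hle⟩ := exists_ne_zero_lt_one_of_ne_le_generatorBound hw₀
  have hx : IsIntegral ℤ (x : K) := RingOfIntegers.isIntegral_coe x
  have hgen : ℚ⟮(x : K)⟯ = ⊤ := is_primitive_element_of_infinitePlace_lt hx₀ hlt (.inl hw₀)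
  refine ⟨x, (x : K).2, IntermediateField.adjoin_simple_coe_eq_of_adjoin_simple_eq_top hgen, ?_⟩
  have hroot : aeval ((x : K) : ℂ) (minpoly ℤ (x : K)) = 0 := by
    rw [← IntermediateField.algebraMap_apply, aeval_algebraMap_apply, minpoly.aeval, map_zero]
  have hM : mahlerMeasure (minpoly ℤ (x : K)) ≤ generatorBound K :=
    (mahlerMeasure_minpoly_le hw₀ x fun w hw ↦ (hlt w hw).le).trans
      (max_le ((one_le_of_lt_one hx₀ hlt).trans hle) hle)
  calc height _ ≤ mahlerMeasure (minpoly ℤ (x : K)) ^ ((minpoly ℤ (x : K)).natDegree : ℝ)⁻¹ :=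
        height_le_mahlerMeasure_rpow (minpoly.irreducible hx) hroot
    _ ≤ (generatorBound K : ℝ) ^ (finrank ℚ K : ℝ)⁻¹ := by
        rw [natDegree_minpoly_int_eq_finrank hgen]
        gcongr
        exact mahlerMeasure_nonneg _
    _ = _ := generatorBound_rpow_inv_finrank K
end

section
/- Let d ≤ -1 be a squarefree integer and let f(x) = ax² + bx + c ∈ ℤ[x] with 1 ≤ a, 1 ≤ c, gcd(a,b,c) = 1, and b² - 4ac = d·e² for some nonzero integer e. If α is a root of f, then ℚ(α) = ℚ(√d) and H(α) = max{a, c}^(1/2). -/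
open Polynomial

/-! The discriminant `d e²` is negative, so `α` is not real and the roots of `f` are `α`
and `ᾱ`. Hence `f` has no rational root; being primitive, it is irreducible over `ℤ`, and by
Gauss's lemma every irreducible integer polynomial vanishing at `α` is `±f`. So
`H(α)² = M(f) = a · max(1, |α|)² = max(a, a|α|²) = max(a, c)`, since `a|α|² = a α ᾱ = c`.
For the field, `(2aα + b)² = d e²` says that `2aα + b = ±e√d`. -/

open ComplexConjugate
open scoped IntermediateField

lemma mahlerMeasure_eq_mahlerMeasure_map (f : ℤ[X]) :
    _root_.mahlerMeasure f = (f.map (Int.castRingHom ℂ)).mahlerMeasure := by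
  rw [Polynomial.mahlerMeasure_eq_leadingCoeff_mul_prod_roots,
    leadingCoeff_map_of_injective (RingHom.injective_int _), _root_.mahlerMeasure]
  simp

lemma mahlerMeasure_eq_of_associated {f g : ℤ[X]} (h : Associated f g) :
    _root_.mahlerMeasure f = _root_.mahlerMeasure g := by
  obtain ⟨u, rfl⟩ := h
  obtain ⟨r, hr, hu⟩ := Polynomial.isUnit_iff.mp u.isUnit
  rw [mahlerMeasure_eq_mahlerMeasure_map, mahlerMeasure_eq_mahlerMeasure_map, Polynomial.map_mul,
    Polynomial.mahlerMeasure_mul, ← hu, map_C, Polynomial.mahlerMeasure_const]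
  rcases Int.isUnit_iff.mp hr with rfl | rfl <;> simp

section IntegerPolynomials

variable {K : Type*} [Field K] [CharZero K] {α : K} {f g : ℤ[X]}

lemma isPrimitive_of_irreducible_of_aeval_eq_zero (hf : Irreducible f) (hfα : aeval α f = 0) :
    f.IsPrimitive :=
  hf.isPrimitive (natDegree_pos_of_aeval_root hf.ne_zero hfα fun _ h ↦ by simpa using h).ne'

lemma associated_minpoly_of_irreducible_of_aeval_eq_zero (hf : Irreducible f)
    (hfα : aeval α f = 0) : Associated (minpoly ℚ α) (f.map (Int.castRingHom ℚ)) := by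
  have hfQ : Irreducible (f.map (Int.castRingHom ℚ)) :=
    (IsPrimitive.Int.irreducible_iff_irreducible_map_cast
      (isPrimitive_of_irreducible_of_aeval_eq_zero hf hfα)).mp hf
  have hfQα : aeval α (f.map (Int.castRingHom ℚ)) = 0 := by
    rwa [← algebraMap_int_eq, aeval_map_algebraMap]
  have hint : IsIntegral ℚ α := IsAlgebraic.isIntegral ⟨_, hfQ.ne_zero, hfQα⟩
  exact (minpoly.irreducible hint).associated_of_dvd hfQ (minpoly.dvd ℚ α hfQα)

lemma associated_of_irreducible_of_aeval_eq_zero (hf : Irreducible f) (hg : Irreducible g)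
    (hfα : aeval α f = 0) (hgα : aeval α g = 0) : Associated f g := by
  have hfg := (associated_minpoly_of_irreducible_of_aeval_eq_zero hf hfα).symm.trans
    (associated_minpoly_of_irreducible_of_aeval_eq_zero hg hgα)
  exact associated_of_dvd_dvd
    ((IsPrimitive.Int.dvd_iff_map_cast_dvd_map_cast f g
      (isPrimitive_of_irreducible_of_aeval_eq_zero hf hfα)).mpr hfg.dvd)
    ((IsPrimitive.Int.dvd_iff_map_cast_dvd_map_cast g f
      (isPrimitive_of_irreducible_of_aeval_eq_zero hg hgα)).mpr hfg.symm.dvd)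

end IntegerPolynomials

lemma height_eq_of_irreducible_of_aeval_eq_zero {α : ℂ} {g : ℤ[X]} (hg : Irreducible g)
    (hgα : aeval α g = 0) : height α = _root_.mahlerMeasure g ^ (g.natDegree : ℝ)⁻¹ := by
  suffices {h : ℝ | ∃ f : ℤ[X], Irreducible f ∧ aeval α f = 0 ∧
      h = _root_.mahlerMeasure f ^ (f.natDegree : ℝ)⁻¹} =
      {_root_.mahlerMeasure g ^ (g.natDegree : ℝ)⁻¹} by
    rw [height, this, csInf_singleton]
  ext h
  constructor
  · rintro ⟨f, hf, hfα, rfl⟩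
    have hfg := associated_of_irreducible_of_aeval_eq_zero hf hg hfα hgα
    rw [Set.mem_singleton_iff, mahlerMeasure_eq_of_associated hfg,
      natDegree_eq_of_degree_eq (degree_eq_degree_of_associated hfg)]
  · rintro rfl
    exact ⟨g, hg, hgα, rfl⟩

lemma irreducible_of_natDegree_le_two_of_aeval_eq_zero {F L : Type*} [Field F] [Field L]
    [Algebra F L] {p : F[X]} {x : L} (hp : p ≠ 0) (hdeg : p.natDegree ≤ 2)
    (hx : aeval x p = 0) (hxF : x ∉ (algebraMap F L).range) : Irreducible p := by
  have hint : IsIntegral F x := IsAlgebraic.isIntegral ⟨p, hp, hx⟩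
  exact ((associated_of_dvd_of_natDegree_le (minpoly.dvd F x hx) hp
    (hdeg.trans ((minpoly.two_le_natDegree_iff hint).mpr hxF))).irreducible
    (minpoly.irreducible hint))

lemma IntermediateField.adjoin_simple_eq_of_eq_mul_add {F E : Type*} [Field F] [Field E]
    [Algebra F E] {x y : E} {r s : F} (hr : r ≠ 0)
    (h : y = algebraMap F E r * x + algebraMap F E s) : F⟮y⟯ = F⟮x⟯ := by
  have hx : x = algebraMap F E r⁻¹ * y + algebraMap F E (-(r⁻¹ * s)) := by
    have : algebraMap F E r ≠ 0 := by simpa using hr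
    rw [h, map_neg, map_mul, map_inv₀]
    field_simp
    ring
  refine le_antisymm (adjoin_simple_le_iff.mpr ?_) (adjoin_simple_le_iff.mpr ?_)
  · rw [h]
    exact add_mem (mul_mem (algebraMap_mem _ r) (mem_adjoin_simple_self F x)) (algebraMap_mem _ s)
  · rw [hx]
    exact add_mem (mul_mem (algebraMap_mem _ _) (mem_adjoin_simple_self F y)) (algebraMap_mem _ _)

lemma IntermediateField.adjoin_simple_eq_of_sq_eq {F E : Type*} [Field F] [Field E]
    [Algebra F E] {x y : E} {r : F} (hr : r ≠ 0) (h : y ^ 2 = (algebraMap F E r * x) ^ 2) :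
    F⟮y⟯ = F⟮x⟯ := by
  rcases sq_eq_sq_iff_eq_or_eq_neg.mp h with h | h
  · exact adjoin_simple_eq_of_eq_mul_add (s := 0) hr (by simp [h])
  · exact adjoin_simple_eq_of_eq_mul_add (s := 0) (neg_ne_zero.mpr hr) (by simp [h])

section RealQuadratic

variable {a b c : ℝ} {α : ℂ}

lemma Complex.im_ne_zero_of_discrim_neg (hdisc : discrim a b c < 0)
    (hα : (a : ℂ) * α ^ 2 + b * α + c = 0) : α.im ≠ 0 := by
  intro him
  have hre : α = (α.re : ℂ) := Complex.ext rfl (by simp [him])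
  have hαre : a * (α.re * α.re) + b * α.re + c = 0 := by
    rw [hre] at hα
    exact_mod_cast (by linear_combination hα : (a : ℂ) * (α.re * α.re) + b * α.re + c = 0)
  rw [discrim_eq_sq_of_quadratic_eq_zero hαre] at hdisc
  exact hdisc.not_ge (sq_nonneg _)

lemma vieta_conj_of_im_ne_zero (hα : (a : ℂ) * α ^ 2 + b * α + c = 0)
    (him : α.im ≠ 0) : a * (α + conj α) = -b ∧ a * (α * conj α) = c := by
  have hconj : (a : ℂ) * conj α ^ 2 + b * conj α + c = 0 := by
    simpa using congrArg conj hα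
  have hne : α - conj α ≠ 0 := by
    simpa [Complex.sub_conj, Complex.ext_iff] using him
  have hsum : a * (α + conj α) = -b := by
    have : (α - conj α) * (a * (α + conj α) + b) = 0 := by linear_combination hα - hconj
    linear_combination (mul_eq_zero.mp this).resolve_left hne
  exact ⟨hsum, by linear_combination α * hsum - hα⟩

lemma quadratic_eq_C_mul_X_sub_C_mul_X_sub_C_conj (hα : (a : ℂ) * α ^ 2 + b * α + c = 0)
    (him : α.im ≠ 0) :
    C (a : ℂ) * X ^ 2 + C (b : ℂ) * X + C (c : ℂ) =
      C (a : ℂ) * ((X - C α) * (X - C (conj α))) := by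
  obtain ⟨hsum, hprod⟩ := vieta_conj_of_im_ne_zero hα him
  rw [← hprod, show (b : ℂ) = -(a * (α + conj α)) by rw [hsum, neg_neg]]
  simp only [map_neg, map_mul, map_add]
  ring

lemma mahlerMeasure_quadratic_of_im_ne_zero (ha : 0 < a)
    (hα : (a : ℂ) * α ^ 2 + b * α + c = 0) (him : α.im ≠ 0) :
    (C (a : ℂ) * X ^ 2 + C (b : ℂ) * X + C (c : ℂ)).mahlerMeasure = max a c := by
  have hnorm : a * ‖α‖ ^ 2 = c := by
    have := (vieta_conj_of_im_ne_zero hα him).2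
    rw [Complex.mul_conj, ← Complex.sq_norm] at this
    exact_mod_cast this
  have hmax : max 1 ‖α‖ * max 1 ‖α‖ = max 1 (‖α‖ ^ 2) := by
    rcases le_total ‖α‖ 1 with h | h
    · rw [max_eq_left h, max_eq_left (by nlinarith [norm_nonneg α]), mul_one]
    · rw [max_eq_right h, max_eq_right (by nlinarith), sq]
  rw [quadratic_eq_C_mul_X_sub_C_mul_X_sub_C_conj hα him, mahlerMeasure_mul,
    mahlerMeasure_mul, mahlerMeasure_const, mahlerMeasure_X_sub_C, mahlerMeasure_X_sub_C,
    Complex.norm_conj, hmax, Complex.norm_real, Real.norm_of_nonneg ha.le,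
    mul_max_of_nonneg _ _ ha.le, mul_one, hnorm]

end RealQuadratic

lemma isPrimitive_quadratic {a b c : ℤ} (h : Int.gcd a (Int.gcd b c) = 1) :
    (C a * X ^ 2 + C b * X + C c).IsPrimitive := by
  rw [isPrimitive_iff_isUnit_of_C_dvd]
  intro r hr
  simp only [C_dvd_iff_dvd_coeff, coeff_add, coeff_C_mul_X_pow, coeff_C_mul_X, coeff_C] at hr
  have hr1 : r ∣ (Int.gcd a (Int.gcd b c) : ℤ) :=
    Int.dvd_coe_gcd (by simpa using hr 2)
      (Int.dvd_coe_gcd (by simpa using hr 1) (by simpa using hr 0))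
  exact isUnit_of_dvd_one (by rwa [h] at hr1)

lemma irreducible_quadratic_of_im_ne_zero {a b c : ℤ} {α : ℂ} (ha : a ≠ 0)
    (h : Int.gcd a (Int.gcd b c) = 1) (hα : aeval α (C a * X ^ 2 + C b * X + C c) = 0)
    (him : α.im ≠ 0) : Irreducible (C a * X ^ 2 + C b * X + C c) := by
  rw [IsPrimitive.Int.irreducible_iff_irreducible_map_cast (isPrimitive_quadratic h)]
  have hdeg : ((C a * X ^ 2 + C b * X + C c).map (Int.castRingHom ℚ)).natDegree = 2 := by
    rw [natDegree_map_eq_of_injective (RingHom.injective_int _), natDegree_quadratic ha]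
  refine irreducible_of_natDegree_le_two_of_aeval_eq_zero (x := α)
    (ne_zero_of_natDegree_gt (n := 0) (by omega)) hdeg.le ?_ ?_
  · rwa [← algebraMap_int_eq, aeval_map_algebraMap]
  · rintro ⟨q, rfl⟩
    simp at him

theorem quadratic_generator_height_general (d : ℤ) (hd : d ≤ -1)
    (a b c e : ℤ) (ha : 1 ≤ a) (hg : Int.gcd a (Int.gcd b c) = 1)
    (he : e ≠ 0) (hdisc : b ^ 2 - 4 * a * c = d * e ^ 2)
    (α : ℂ) (hα : (a : ℂ) * α ^ 2 + (b : ℂ) * α + (c : ℂ) = 0) :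
    (∀ x : ℂ, x ^ 2 = (d : ℂ) →
      IntermediateField.adjoin ℚ {α} = IntermediateField.adjoin ℚ {x}) ∧
    height α = Real.sqrt ((max a c : ℤ) : ℝ) := by
  have ha0 : a ≠ 0 := by omega
  have hαR : ((a : ℝ) : ℂ) * α ^ 2 + (b : ℝ) * α + (c : ℝ) = 0 := by exact_mod_cast hα
  have him : α.im ≠ 0 := by
    refine Complex.im_ne_zero_of_discrim_neg ?_ hαR
    have : d * e ^ 2 < 0 := mul_neg_of_neg_of_pos (by omega) (by positivity)
    rw [discrim]
    exact_mod_cast hdisc ▸ this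
  refine ⟨fun x hx ↦ ?_, ?_⟩
  · have hw : (2 * a * α + b) ^ 2 = ((e : ℂ) * x) ^ 2 := by
      linear_combination 4 * (a : ℂ) * hα - (e : ℂ) ^ 2 * hx
        + (by exact_mod_cast hdisc : (b : ℂ) ^ 2 - 4 * a * c = d * e ^ 2)
    calc ℚ⟮α⟯ = ℚ⟮2 * a * α + b⟯ :=
          (IntermediateField.adjoin_simple_eq_of_eq_mul_add (r := 2 * (a : ℚ)) (s := b)
            (mul_ne_zero two_ne_zero (by exact_mod_cast ha0)) (by simp)).symm
      _ = ℚ⟮x⟯ :=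
          IntermediateField.adjoin_simple_eq_of_sq_eq (r := (e : ℚ)) (by simpa) (by simpa)
  · have hgα : aeval α (C a * X ^ 2 + C b * X + C c) = 0 := by simpa using hα
    rw [height_eq_of_irreducible_of_aeval_eq_zero
        (irreducible_quadratic_of_im_ne_zero ha0 hg hgα him) hgα,
      natDegree_quadratic ha0, mahlerMeasure_eq_mahlerMeasure_map]
    have hmap : (C a * X ^ 2 + C b * X + C c).map (Int.castRingHom ℂ) =
        C ((a : ℝ) : ℂ) * X ^ 2 + C ((b : ℝ) : ℂ) * X + C ((c : ℝ) : ℂ) := by simp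
    rw [hmap, mahlerMeasure_quadratic_of_im_ne_zero (by exact_mod_cast ha) hαR him,
      Real.sqrt_eq_rpow]
    norm_num

/-- Lemma 7.1: a root `α` of `ax² + bx + c` with `a, c ≥ 1`, `gcd(a,b,c) = 1` and
discriminant `d·e²` (`d ≤ -1` squarefree, `e ≠ 0`) generates `ℚ(√d)` and has
height `max{a,c}^(1/2)`. -/
theorem quadratic_generator_height (d : ℤ) (hd : d ≤ -1) (hsq : Squarefree d)
    (a b c e : ℤ) (ha : 1 ≤ a) (hc : 1 ≤ c) (hg : Int.gcd a (Int.gcd b c) = 1)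
    (he : e ≠ 0) (hdisc : b ^ 2 - 4 * a * c = d * e ^ 2)
    (α : ℂ) (hα : (a : ℂ) * α ^ 2 + (b : ℂ) * α + (c : ℂ) = 0) :
    (∀ x : ℂ, x ^ 2 = (d : ℂ) →
      IntermediateField.adjoin ℚ {α} = IntermediateField.adjoin ℚ {x}) ∧
    height α = Real.sqrt ((max a c : ℤ) : ℝ) :=
  quadratic_generator_height_general d hd a b c e ha hg he hdisc α hα
end
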